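/- arXiv:2403.14570 — 8 statements merged into one kernel-verified Lean document; each statement's English description precedes it below -/
import Mathlib

section
/- Let f : ℝ → ℝ be a probability density function (nonnegative, integrable, with total integral 1) that is unimodal with mode M, i.e. f is nondecreasing on (−∞, M] and nonincreasing on [M, ∞). Let X and Y be independent random variables each with density f. Then the function g(t) = ∫ f(x) f(x − t) dx is a density of X − Y, g is an even function, and g is nonincreasing on [0, ∞) (equivalently, nondecreasing on (−∞, 0]), so X − Y has a symmetric unimodal distribution with mode 0. -/
open MeasureTheory ProbabilityTheory Set
open scoped ENNReal

/-!
By the layer-cake formula, `∫ f(x) f(x - t) dx` is the integral over `u, v > 0` of the length of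
`{f > u} ∩ ({f > v} + t)`. The superlevel sets of a unimodal function are nested intervals, and the
overlap of an interval with a translate of a nested interval can only shrink as the translation
grows, so the correlation is nonincreasing in `t ≥ 0`; it is even by the substitution
`x ↦ x + t`. It is the density of `X - Y` because the law of `X - Y` is the convolution of the
laws of `X` and `-Y`.
-/

theorem integral_mul_comp_sub_neg {G : Type*} [AddGroup G] [MeasurableSpace G] [MeasurableAdd G]
    (μ : Measure G) [μ.IsAddRightInvariant] (f : G → ℝ) (t : G) :
    ∫ x, f x * f (x - -t) ∂μ = ∫ x, f x * f (x - t) ∂μ := by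
  rw [← integral_sub_right_eq_self (fun x => f x * f (x - -t)) t]
  simp only [sub_neg_eq_add, sub_add_cancel, mul_comm]

theorem Function.Even.monotoneOn_Iic {α β : Type*} [AddCommGroup α] [PartialOrder α]
    [IsOrderedAddMonoid α] [Preorder β] {g : α → β} (heven : g.Even) (h : AntitoneOn g (Ici 0)) :
    MonotoneOn g (Iic 0) := by
  intro s hs t ht hst
  rw [← heven s, ← heven t]
  exact h (mem_Ici.2 (neg_nonneg.2 ht)) (mem_Ici.2 (neg_nonneg.2 hs)) (neg_le_neg hst)

theorem lintegral_ofReal_mul_ofReal_eq_setLIntegral_measure {α : Type*} [MeasurableSpace α]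
    (μ : Measure α) [SFinite μ] {f g : α → ℝ} (hf : Measurable f) (hg : Measurable g) :
    ∫⁻ x, ENNReal.ofReal (f x) * ENNReal.ofReal (g x) ∂μ
      = ∫⁻ p in Ioi 0 ×ˢ Ioi 0, μ {x | p.1 < f x ∧ p.2 < g x} := by
  set W := {q : α × ℝ × ℝ | q.2.1 < f q.1 ∧ q.2.2 < g q.1}
  have hW : MeasurableSet W :=
    (measurableSet_lt measurable_snd.fst (hf.comp measurable_fst)).inter
      (measurableSet_lt measurable_snd.snd (hg.comp measurable_fst))
  have hsection : ∀ x, Prod.mk x ⁻¹' W ∩ Ioi 0 ×ˢ Ioi 0 = Ioo 0 (f x) ×ˢ Ioo 0 (g x) := by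
    intro x
    ext p
    simp only [W, mem_inter_iff, mem_preimage, mem_ofPred_eq, mem_prod, mem_Ioi, mem_Ioo]
    tauto
  calc ∫⁻ x, ENNReal.ofReal (f x) * ENNReal.ofReal (g x) ∂μ
      = ∫⁻ x, volume.restrict (Ioi 0 ×ˢ Ioi 0) (Prod.mk x ⁻¹' W) ∂μ := by
        refine lintegral_congr fun x => ?_
        rw [Measure.restrict_apply (hW.preimage measurable_prodMk_left), hsection,
          Measure.volume_eq_prod, Measure.prod_prod, Real.volume_Ioo, Real.volume_Ioo,
          sub_zero, sub_zero]
    _ = μ.prod (volume.restrict (Ioi 0 ×ˢ Ioi 0)) W := (Measure.prod_apply hW).symm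
    _ = ∫⁻ p in Ioi 0 ×ˢ Ioi 0, μ {x | p.1 < f x ∧ p.2 < g x} := Measure.prod_apply_symm hW

theorem antitoneOn_volume_inter_preimage_sub {A B : Set ℝ} (hA : A.OrdConnected)
    (hB : B.OrdConnected) (hAB : A ⊆ B ∨ B ⊆ A) :
    AntitoneOn (fun t => volume (A ∩ (fun x => x - t) ⁻¹' B)) (Ici 0) := by
  intro s (hs : 0 ≤ s) t _ hst
  rcases hAB with hAB | hBA
  · refine measure_mono fun x ⟨hxA, hxB⟩ => ⟨hxA, hB.out hxB (hAB hxA) ⟨?_, ?_⟩⟩ <;>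
      dsimp only <;> linarith
  · -- translating by `t - s` carries the `t`-overlap into the `s`-overlap
    have hshift : A ∩ (fun x => x - t) ⁻¹' B ⊆
        (fun x => x - (t - s)) ⁻¹' (A ∩ (fun x => x - s) ⁻¹' B) := by
      rintro x ⟨hxA, hxB⟩
      refine ⟨hA.out (hBA hxB) hxA ⟨by dsimp only; linarith, by dsimp only; linarith⟩, ?_⟩
      simpa only [mem_preimage, sub_sub, sub_add_cancel] using hxB
    calc volume (A ∩ (fun x => x - t) ⁻¹' B)
        ≤ volume ((fun x => x - (t - s)) ⁻¹' (A ∩ (fun x => x - s) ⁻¹' B)) := measure_mono hshift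
      _ = volume (A ∩ (fun x => x - s) ⁻¹' B) :=
        (measurePreserving_sub_right volume (t - s)).measure_preimage <|
          (hA.measurableSet.inter
            (hB.measurableSet.preimage (measurable_sub_const s))).nullMeasurableSet

theorem MeasureTheory.Measure.map_neg_withDensity {G : Type*} [AddGroup G] [MeasurableSpace G]
    [MeasurableNeg G] {μ : Measure G} [μ.IsNegInvariant] {F : G → ℝ≥0∞} (hF : Measurable F) :
    (μ.withDensity F).map Neg.neg = μ.withDensity fun x => F (-x) := by
  ext s hs
  rw [Measure.map_apply measurable_neg hs, withDensity_apply _ (measurable_neg hs),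
    withDensity_apply _ hs]
  simpa only [neg_neg] using (Measure.measurePreserving_neg μ).setLIntegral_comp_preimage hs
    (f := fun x => F (-x)) (hF.comp measurable_neg)

theorem ProbabilityTheory.IndepFun.map_sub_eq_withDensity {Ω G : Type*} [MeasurableSpace Ω]
    {μ : Measure Ω} [IsFiniteMeasure μ] [AddCommGroup G] [MeasurableSpace G] [MeasurableAdd₂ G]
    [MeasurableNeg G] {ν : Measure G} [SFinite ν] [ν.IsAddLeftInvariant] [ν.IsNegInvariant]
    {X Y : Ω → G} (hX : Measurable X) (hY : Measurable Y) (hXY : IndepFun X Y μ)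
    {F H : G → ℝ≥0∞} (hF : Measurable F) (hH : Measurable H)
    (hXd : μ.map X = ν.withDensity F) (hYd : μ.map Y = ν.withDensity H) :
    μ.map (X - Y) = ν.withDensity fun t => ∫⁻ x, F x * H (x - t) ∂ν := by
  have hnegY : μ.map (-Y) = ν.withDensity fun x => H (-x) := by
    rw [← Measure.map_neg_withDensity hH, ← hYd, Measure.map_map measurable_neg hY]
    rfl
  rw [sub_eq_add_neg, (hXY.comp measurable_id measurable_neg).map_add_eq_map_conv_map hX hY.neg,
    hXd, hnegY, conv_withDensity_eq_lconvolution (g := fun x => H (-x)) hF (hH.comp measurable_neg)]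
  congr 1
  ext t
  simp only [lconvolution_def, neg_add_rev, neg_neg, sub_eq_add_neg, add_comm]

section Unimodal

variable {f : ℝ → ℝ} {M : ℝ}

theorem ordConnected_setOf_lt_of_unimodal (hmono : MonotoneOn f (Iic M))
    (hanti : AntitoneOn f (Ici M)) (u : ℝ) : {x | u < f x}.OrdConnected := by
  refine ⟨fun x hx y hy z hz => ?_⟩
  rcases le_total z M with h | h
  · exact lt_of_lt_of_le hx (hmono (hz.1.trans h) h hz.1)
  · exact lt_of_lt_of_le hy (hanti h (h.trans hz.2) hz.2)

theorem measurable_of_unimodal (hmono : MonotoneOn f (Iic M)) (hanti : AntitoneOn f (Ici M)) :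
    Measurable f :=
  measurable_of_Ioi fun u => (ordConnected_setOf_lt_of_unimodal hmono hanti u).measurableSet

theorem le_apply_mode_of_unimodal (hmono : MonotoneOn f (Iic M)) (hanti : AntitoneOn f (Ici M))
    (x : ℝ) : f x ≤ f M := by
  rcases le_total x M with h | h
  · exact hmono h (mem_Iic.2 le_rfl) h
  · exact hanti (mem_Ici.2 le_rfl) h h

theorem antitoneOn_lintegral_mul_comp_sub_of_unimodal (hmono : MonotoneOn f (Iic M))
    (hanti : AntitoneOn f (Ici M)) :
    AntitoneOn (fun t => ∫⁻ x, ENNReal.ofReal (f x) * ENNReal.ofReal (f (x - t))) (Ici 0) := by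
  intro s hs t ht hst
  have hf := measurable_of_unimodal hmono hanti
  dsimp only
  rw [lintegral_ofReal_mul_ofReal_eq_setLIntegral_measure volume hf
      (g := fun x => f (x - t)) (hf.comp (measurable_sub_const t)),
    lintegral_ofReal_mul_ofReal_eq_setLIntegral_measure volume hf
      (g := fun x => f (x - s)) (hf.comp (measurable_sub_const s))]
  refine lintegral_mono fun (p : ℝ × ℝ) => ?_
  have hnested : {x | p.1 < f x} ⊆ {x | p.2 < f x} ∨ {x | p.2 < f x} ⊆ {x | p.1 < f x} :=
    (le_total p.2 p.1).imp (fun h _ hx => h.trans_lt hx) (fun h _ hx => h.trans_lt hx)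
  exact antitoneOn_volume_inter_preimage_sub (ordConnected_setOf_lt_of_unimodal hmono hanti _)
    (ordConnected_setOf_lt_of_unimodal hmono hanti _) hnested hs ht hst

theorem ofReal_integral_mul_comp_sub_of_unimodal (hmono : MonotoneOn f (Iic M))
    (hanti : AntitoneOn f (Ici M)) (hf0 : ∀ x, 0 ≤ f x) (hfint : Integrable f) (t : ℝ) :
    ENNReal.ofReal (∫ x, f x * f (x - t))
      = ∫⁻ x, ENNReal.ofReal (f x) * ENNReal.ofReal (f (x - t)) := by
  have hf := measurable_of_unimodal hmono hanti
  have hint : Integrable fun x => f x * f (x - t) :=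
    hfint.mul_bdd (c := f M) (hf.comp (measurable_sub_const t)).aestronglyMeasurable
      (ae_of_all _ fun x => by
        rw [Real.norm_of_nonneg (hf0 _)]
        exact le_apply_mode_of_unimodal hmono hanti _)
  rw [ofReal_integral_eq_lintegral_ofReal hint (ae_of_all _ fun x => mul_nonneg (hf0 x) (hf0 _))]
  simp only [ENNReal.ofReal_mul (hf0 _)]

end Unimodal

theorem stmt0_general {Ω : Type*} [MeasureSpace Ω] [IsProbabilityMeasure (ℙ : Measure Ω)]
    (f : ℝ → ℝ) (M : ℝ)
    (hf0 : ∀ x, 0 ≤ f x) (hfint : Integrable f)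
    (hmono : MonotoneOn f (Iic M)) (hanti : AntitoneOn f (Ici M))
    (X Y : Ω → ℝ) (hX : Measurable X) (hY : Measurable Y)
    (hindep : IndepFun X Y (ℙ : Measure Ω))
    (hXd : Measure.map X (ℙ : Measure Ω)
        = volume.withDensity (fun x => ENNReal.ofReal (f x)))
    (hYd : Measure.map Y (ℙ : Measure Ω)
        = volume.withDensity (fun x => ENNReal.ofReal (f x)))
    (g : ℝ → ℝ) (hg : ∀ t, g t = ∫ x, f x * f (x - t)) :
    Measure.map (fun ω : Ω => X ω - Y ω) (ℙ : Measure Ω)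
        = volume.withDensity (fun t => ENNReal.ofReal (g t))
    ∧ (∀ t, g (-t) = g t)
    ∧ AntitoneOn g (Ici 0)
    ∧ MonotoneOn g (Iic 0) := by
  have hf := measurable_of_unimodal hmono hanti
  have hg_nonneg : ∀ t, 0 ≤ g t := fun t => by
    rw [hg]
    exact integral_nonneg fun x => mul_nonneg (hf0 x) (hf0 _)
  have hG : ∀ t, ENNReal.ofReal (g t)
      = ∫⁻ x, ENNReal.ofReal (f x) * ENNReal.ofReal (f (x - t)) := fun t => by
    rw [hg, ofReal_integral_mul_comp_sub_of_unimodal hmono hanti hf0 hfint]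
  have heven : ∀ t, g (-t) = g t := fun t => by
    rw [hg, hg, integral_mul_comp_sub_neg]
  have hanti_g : AntitoneOn g (Ici 0) := fun s hs t ht hst =>
    (ENNReal.ofReal_le_ofReal_iff (hg_nonneg s)).1 <| by
      rw [hG, hG]
      exact antitoneOn_lintegral_mul_comp_sub_of_unimodal hmono hanti hs ht hst
  refine ⟨?_, heven, hanti_g, Function.Even.monotoneOn_Iic heven hanti_g⟩
  rw [show (fun ω => X ω - Y ω) = X - Y from rfl,
    hindep.map_sub_eq_withDensity hX hY hf.ennreal_ofReal hf.ennreal_ofReal hXd hYd]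
  simp only [hG]

/-- Let `f` be a probability density on `ℝ` (nonnegative, integrable, total integral 1)
that is unimodal with mode `M` (nondecreasing on `(−∞, M]`, nonincreasing on `[M, ∞)`),
and let `X, Y` be independent random variables each with density `f`. Then
`g(t) = ∫ f(x) f(x − t) dx` is a density of `X − Y`, `g` is even, and `g` is
nonincreasing on `[0, ∞)` (equivalently, nondecreasing on `(−∞, 0]`); that is, `X − Y`
has a symmetric unimodal distribution with mode `0` (Hodges–Lehmann 1954). -/
theorem stmt0 {Ω : Type*} [MeasureSpace Ω] [IsProbabilityMeasure (ℙ : Measure Ω)]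
    (f : ℝ → ℝ) (M : ℝ)
    (hf0 : ∀ x, 0 ≤ f x) (hfint : Integrable f)
    (hf1 : ∫ x, f x = 1)
    (hmono : MonotoneOn f (Iic M)) (hanti : AntitoneOn f (Ici M))
    (X Y : Ω → ℝ) (hX : Measurable X) (hY : Measurable Y)
    (hindep : IndepFun X Y (ℙ : Measure Ω))
    (hXd : Measure.map X (ℙ : Measure Ω)
        = volume.withDensity (fun x => ENNReal.ofReal (f x)))
    (hYd : Measure.map Y (ℙ : Measure Ω)
        = volume.withDensity (fun x => ENNReal.ofReal (f x)))
    (g : ℝ → ℝ) (hg : ∀ t, g t = ∫ x, f x * f (x - t)) :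
    Measure.map (fun ω : Ω => X ω - Y ω) (ℙ : Measure Ω)
        = volume.withDensity (fun t => ENNReal.ofReal (g t))
    ∧ (∀ t, g (-t) = g t)
    ∧ AntitoneOn g (Ici 0)
    ∧ MonotoneOn g (Iic 0) :=
  stmt0_general f M hf0 hfint hmono hanti X Y hX hY hindep hXd hYd g hg
end

section
/- For every integer k ≥ 2, all real numbers λ, μ, and all x₁, …, x_k ∈ ℝ, the k-th central moment kernel satisfies ψ_k(λx₁ + μ, λx₂ + μ, …, λx_k + μ) = λ^k · ψ_k(x₁, …, x_k). -/
/-!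
Homogeneity is immediate, since every monomial of `ψ_k` has degree `k`. For translation
invariance, differentiate `s ↦ ψ_k(x₁ + s, …, x_k + s)`. With
`A_j = Σ* x_{i₁}^{k-j-1} x_{i₂} ⋯ x_{i_{j+1}}`, differentiating `x_{i₂} ⋯ x_{i_{j+1}}` and
double counting shows that the derivative of the `j`-th term of `ψ_k` is `(-1)^j (A_j + A_{j-1})`.
The sum therefore telescopes to `(-1)^k A_{k-2} = (-1)^k (k-1) e_{k-1}(x)`, which cancels the
derivative of the last term `(-1)^{k-1} (k-1) x₁ ⋯ x_k`.
-/

open Finset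

/-- The `k`-th central moment kernel (Heffernan 1997):
`ψ_k(x₁,…,x_k) = Σ_{j=0}^{k−2} (−1)^j (1/(k−j)) Σ* x_{i₁}^{k−j} x_{i₂} ⋯ x_{i_{j+1}}
  + (−1)^{k−1} (k−1) x₁ ⋯ x_k`,
where `Σ*` runs over all pairwise distinct indices `i₁,…,i_{j+1}` with
`i₂ < i₃ < ⋯ < i_{j+1}` (i.e. over an index `i₁` and a `j`-element subset of the
remaining indices). -/
noncomputable def psi (k : ℕ) (x : Fin k → ℝ) : ℝ :=
  (∑ j ∈ Finset.range (k - 1), (-1 : ℝ) ^ j * (1 / ((k : ℝ) - j)) *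
      ∑ i1 : Fin k, ∑ S ∈ Finset.powersetCard j (Finset.univ.erase i1),
        x i1 ^ (k - j) * ∏ i ∈ S, x i)
    + (-1 : ℝ) ^ (k - 1) * ((k : ℝ) - 1) * ∏ i, x i

section

variable {ι M : Type*} [DecidableEq ι] [AddCommMonoid M]

theorem Finset.sum_powersetCard_succ_sum_erase (U : Finset ι) (j : ℕ) (f : ι → Finset ι → M) :
    ∑ S ∈ U.powersetCard (j + 1), ∑ s ∈ S, f s (S.erase s)
      = ∑ T ∈ U.powersetCard j, ∑ s ∈ U \ T, f s T := by
  rw [sum_sigma', sum_sigma']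
  apply sum_bij' (fun p _ => ⟨p.1.erase p.2, p.2⟩) (fun p _ => ⟨insert p.2 p.1, p.2⟩) <;>
    rintro ⟨S, s⟩ h <;> simp only [mem_sigma, mem_powersetCard, mem_sdiff] at h ⊢
  · rw [insert_erase h.2]
  · rw [erase_insert h.2.2]
  · grind
  · grind

theorem Finset.sum_sum_powersetCard_erase (U : Finset ι) (j : ℕ) (f : ι → Finset ι → M) :
    ∑ i ∈ U, ∑ T ∈ (U.erase i).powersetCard j, f i T
      = ∑ T ∈ U.powersetCard j, ∑ i ∈ U \ T, f i T :=
  sum_comm' fun i T => by grind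

theorem hasDerivAt_sum_powersetCard_prod_add (U : Finset ι) (j : ℕ) (x : ι → ℝ) (t : ℝ) :
    HasDerivAt (fun s => ∑ S ∈ U.powersetCard (j + 1), ∏ l ∈ S, (x l + s))
      ((#U - j : ℕ) * ∑ T ∈ U.powersetCard j, ∏ l ∈ T, (x l + t)) t := by
  have h := HasDerivAt.fun_sum fun S (_ : S ∈ U.powersetCard (j + 1)) =>
    HasDerivAt.fun_finsetProd (u := S) fun l _ => (hasDerivAt_id t).const_add (x l)
  refine h.congr_deriv ?_
  simp only [smul_eq_mul, mul_one, id]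
  rw [sum_powersetCard_succ_sum_erase U j fun _ T => ∏ l ∈ T, (x l + t), mul_sum]
  refine sum_congr rfl fun T hT => ?_
  rw [mem_powersetCard] at hT
  rw [sum_const, card_sdiff_of_subset hT.1, hT.2, nsmul_eq_mul]

end

section

variable {ι : Type*} [Fintype ι] [DecidableEq ι]

/-- The paper's `Σ* x_{i₁}^m x_{i₂} ⋯ x_{i_{j+1}}`. -/
noncomputable def starSum (j m : ℕ) (x : ι → ℝ) : ℝ :=
  ∑ i, ∑ S ∈ (univ.erase i).powersetCard j, x i ^ m * ∏ l ∈ S, x l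

theorem starSum_mul_const (j m : ℕ) (c : ℝ) (x : ι → ℝ) :
    starSum j m (fun i => c * x i) = c ^ (m + j) * starSum j m x := by
  simp only [starSum, mul_sum]
  refine sum_congr rfl fun i _ => sum_congr rfl fun S hS => ?_
  rw [mul_pow, prod_mul_distrib, prod_const, (mem_powersetCard.mp hS).2, pow_add]
  ring

theorem starSum_one (j : ℕ) (x : ι → ℝ) :
    starSum j 1 x = (j + 1) * ∑ S ∈ univ.powersetCard (j + 1), ∏ l ∈ S, x l := by
  calc starSum j 1 x
      = ∑ S ∈ univ.powersetCard (j + 1), ∑ s ∈ S, x s * ∏ l ∈ S.erase s, x l := by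
        rw [starSum, sum_sum_powersetCard_erase, ← sum_powersetCard_succ_sum_erase]
        simp only [pow_one]
    _ = _ := by
      rw [mul_sum]
      refine sum_congr rfl fun S hS => ?_
      rw [sum_congr rfl fun s hs => mul_prod_erase S x hs, sum_const, (mem_powersetCard.mp hS).2,
        nsmul_eq_mul]
      push_cast
      ring

theorem hasDerivAt_starSum_zero_add (m : ℕ) (x : ι → ℝ) (t : ℝ) :
    HasDerivAt (fun s => starSum 0 m (fun i => x i + s))
      (m * starSum 0 (m - 1) (fun i => x i + t)) t := by
  simp only [starSum, powersetCard_zero, sum_singleton, prod_empty, mul_one, mul_sum]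
  exact HasDerivAt.fun_sum fun i _ => by
    simpa using ((hasDerivAt_id t).const_add (x i)).fun_pow m

theorem hasDerivAt_starSum_succ_add (j m : ℕ) (x : ι → ℝ) (t : ℝ) :
    HasDerivAt (fun s => starSum (j + 1) m (fun i => x i + s))
      (m * starSum (j + 1) (m - 1) (fun i => x i + t)
        + (Fintype.card ι - 1 - j : ℕ) * starSum j m (fun i => x i + t)) t := by
  simp only [starSum, ← mul_sum]
  have h := HasDerivAt.fun_sum fun i (_ : i ∈ univ) =>
    (((hasDerivAt_id t).const_add (x i)).fun_pow m).mul
      (hasDerivAt_sum_powersetCard_prod_add (univ.erase i) j x t)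
  refine h.congr_deriv ?_
  simp only [card_erase_of_mem (mem_univ _), card_univ, id, mul_one, mul_sum, sum_add_distrib]
  congr 1 <;> refine sum_congr rfl fun i _ => sum_congr rfl fun S _ => ?_ <;> ring

end

theorem psi_eq_starSum (k : ℕ) (x : Fin k → ℝ) :
    psi k x = ∑ j ∈ range (k - 1), (-1 : ℝ) ^ j * (1 / ((k : ℝ) - j)) * starSum j (k - j) x
      + (-1 : ℝ) ^ (k - 1) * ((k : ℝ) - 1) * ∏ i, x i := rfl

theorem psi_mul_const (k : ℕ) (c : ℝ) (x : Fin k → ℝ) :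
    psi k (fun i => c * x i) = c ^ k * psi k x := by
  rw [psi_eq_starSum, psi_eq_starSum, mul_add, mul_sum]
  congr 1
  · refine sum_congr rfl fun j hj => ?_
    rw [starSum_mul_const, Nat.sub_add_cancel (by grind : j ≤ k)]
    ring
  · rw [prod_mul_distrib, prod_const, card_univ, Fintype.card_fin]
    ring

theorem psi_add_two_eq (n : ℕ) (y : Fin (n + 2) → ℝ) :
    psi (n + 2) y =
      (∑ j ∈ range n, (-1 : ℝ) ^ (j + 1) / (n + 1 - j) * starSum (j + 1) (n + 1 - j) y
        + starSum 0 (n + 2) y / (n + 2))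
      + (-1) ^ (n + 1) * (n + 1) * ∑ S ∈ univ.powersetCard (n + 2), ∏ i ∈ S, y i := by
  have huniv := powersetCard_self (univ : Finset (Fin (n + 2)))
  rw [card_univ, Fintype.card_fin] at huniv
  rw [psi_eq_starSum, huniv, sum_singleton, show n + 2 - 1 = n + 1 from rfl, sum_range_succ']
  congr 2
  · refine sum_congr rfl fun j _ => ?_
    rw [show n + 2 - (j + 1) = n + 1 - j by omega]
    push_cast
    ring
  · push_cast; ring
  · push_cast; ring

theorem hasDerivAt_psi_add (n : ℕ) (x : Fin (n + 2) → ℝ) (t : ℝ) :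
    HasDerivAt (fun s => psi (n + 2) (fun i => x i + s)) 0 t := by
  simp only [psi_add_two_eq]
  refine (((HasDerivAt.fun_sum fun j _ =>
      (hasDerivAt_starSum_succ_add j (n + 1 - j) x t).const_mul
        ((-1 : ℝ) ^ (j + 1) / (n + 1 - j))).add
      ((hasDerivAt_starSum_zero_add (n + 2) x t).div_const (n + 2))).add
    ((hasDerivAt_sum_powersetCard_prod_add univ (n + 1) x t).const_mul
      ((-1 : ℝ) ^ (n + 1) * (n + 1)))).congr_deriv ?_
  set y := fun i => x i + t
  -- `a j = (-1)^j A_j`, so the `j`-th summand below is `a (j + 1) - a j`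
  set a : ℕ → ℝ := fun j => (-1) ^ j * starSum j (n + 1 - j) y
  have hterm : ∀ j ∈ range n, (-1 : ℝ) ^ (j + 1) / (n + 1 - j) *
      ((n + 1 - j : ℕ) * starSum (j + 1) (n + 1 - j - 1) y
        + (Fintype.card (Fin (n + 2)) - 1 - j : ℕ) * starSum j (n + 1 - j) y) = a (j + 1) - a j := by
    intro j hj
    have hjn : j < n := mem_range.mp hj
    have hpos : (n : ℝ) + 1 - j ≠ 0 := by
      have : (j : ℝ) < n := by exact_mod_cast hjn
      linarith
    simp only [a, Fintype.card_fin, show n + 2 - 1 - j = n + 1 - j by omega,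
      show n + 1 - j - 1 = n + 1 - (j + 1) by omega, Nat.cast_sub (by omega : j ≤ n + 1)]
    push_cast
    field_simp
    ring
  have hlast : a n = (-1) ^ n * (n + 1) * ∑ S ∈ univ.powersetCard (n + 1), ∏ l ∈ S, y l := by
    simp only [a, show n + 1 - n = 1 by omega, starSum_one]
    ring
  rw [sum_congr rfl hterm, sum_range_sub, hlast, card_univ, Fintype.card_fin,
    show n + 2 - (n + 1) = 1 by omega, show n + 2 - 1 = n + 1 from rfl]
  simp only [a]
  push_cast
  field_simp
  ring

theorem psi_add_const {k : ℕ} (hk : 2 ≤ k) (x : Fin k → ℝ) (μ : ℝ) :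
    psi k (fun i => x i + μ) = psi k x := by
  obtain ⟨n, rfl⟩ := Nat.exists_eq_add_of_le' hk
  simpa using is_const_of_deriv_eq_zero (fun t => (hasDerivAt_psi_add n x t).differentiableAt)
    (fun t => (hasDerivAt_psi_add n x t).deriv) μ 0

/-- For every integer `k ≥ 2`, all `λ, μ ∈ ℝ` and all `x₁,…,x_k ∈ ℝ`,
`ψ_k(λx₁ + μ, …, λx_k + μ) = λ^k ψ_k(x₁,…,x_k)`. -/
theorem stmt2 (k : ℕ) (hk : 2 ≤ k) (lam mu : ℝ) (x : Fin k → ℝ) :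
    psi k (fun i => lam * x i + mu) = lam ^ k * psi k x := by
  rw [psi_add_const hk, psi_mul_const]
end

section
/- For every integer k ≥ 2, every integer i with 1 ≤ i ≤ k − 1, and all real numbers a, b, the k-th central moment kernel evaluated at i copies of a followed by k − i copies of b satisfies ψ_k(a, …, a, b, …, b) = (−1)^{i+1} · (a − b)^k / C(k, i), where C(k, i) is the binomial coefficient. -/
/-!
Since `∑ⱼ (-1)ʲ eⱼ(x with xₗ removed) y^(k-1-j) = ∏_{t ≠ l} (y - xₜ)`, integrating from `0` to `xₗ`
gives `ψₖ(x) = ∑ₗ ∫₀^{xₗ} ∏_{t ≠ l} (y - xₜ) dy + (-1)ᵏ ∏ₜ xₜ`. At `i` copies of `a` and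
`m = k - i` copies of `b`, the two kinds of integrands are the two halves of the derivative of
`(y - a)ⁱ (y - b)ᵐ`; by the fundamental theorem of calculus the boundary term at `0` cancels
`(-1)ᵏ aⁱ bᵐ` and only `m ∫ₐᵇ (y - a)ⁱ (y - b)^(m-1) dy` survives, a Beta integral equal to
`(-1)^(i+1) (a - b)ᵏ / C(k, i)`.
-/

open Finset

open scoped Nat

theorem prod_sub_eq_sum_powersetCard {R ι : Type*} [CommRing R] (T : Finset ι) (x : ι → R)
    (y : R) :
    ∏ t ∈ T, (y - x t) = ∑ j ∈ range (#T + 1),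
      (-1) ^ j * (∑ S ∈ T.powersetCard j, ∏ t ∈ S, x t) * y ^ (#T - j) := by
  have h := congrArg (Polynomial.eval y) (Multiset.prod_X_sub_X_eq_sum_esymm (T.val.map x))
  simpa [Polynomial.eval_multiset_prod, Polynomial.eval_finsetSum, Polynomial.eval_prod,
    Finset.esymm_map_val, mul_assoc] using h

theorem integral_prod_sub {ι : Type*} (T : Finset ι) (x : ι → ℝ) (z : ℝ) :
    ∫ y in 0..z, ∏ t ∈ T, (y - x t) = ∑ j ∈ range (#T + 1),
      (-1) ^ j * (∑ S ∈ T.powersetCard j, ∏ t ∈ S, x t) *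
        (z ^ (#T - j + 1) / (#T - j + 1 : ℕ)) := by
  simp_rw [prod_sub_eq_sum_powersetCard]
  rw [intervalIntegral.integral_finsetSum fun j _ =>
    (by fun_prop : Continuous _).intervalIntegrable _ _]
  refine sum_congr rfl fun j _ => ?_
  rw [intervalIntegral.integral_const_mul, integral_pow]
  simp

theorem psi_eq_sum_integral_prod_sub {k : ℕ} (hk : k ≠ 0) (x : Fin k → ℝ) :
    psi k x =
      ∑ i, (∫ y in 0..x i, ∏ t ∈ univ.erase i, (y - x t)) + (-1) ^ k * ∏ t, x t := by
  obtain ⟨n, rfl⟩ := Nat.exists_eq_add_one_of_ne_zero hk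
  have hcard (i : Fin (n + 1)) : #(univ.erase i) = n := by simp
  have hlast (i : Fin (n + 1)) :
      ∑ S ∈ (univ.erase i).powersetCard n, ∏ t ∈ S, x t = ∏ t ∈ univ.erase i, x t := by
    have h := powersetCard_self (univ.erase i)
    rw [hcard i] at h
    rw [h, sum_singleton]
  simp only [integral_prod_sub, hcard]
  rw [sum_comm, sum_range_succ]
  simp only [hlast, Nat.sub_self, zero_add, pow_one, Nat.cast_one, div_one]
  have hdiag :
      ∑ i, ((-1) ^ n * ∏ t ∈ univ.erase i, x t) * x i = (-1) ^ n * (n + 1) * ∏ t, x t := by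
    simp_rw [mul_assoc, mul_comm _ (x _), mul_prod_erase univ x (mem_univ _)]
    simp only [sum_const, card_univ, Fintype.card_fin, nsmul_eq_mul]
    push_cast
    ring
  rw [hdiag, psi, Nat.add_sub_cancel]
  have hterm : ∀ j ∈ range n, (-1) ^ j * (1 / ((↑(n + 1) : ℝ) - j)) * ∑ i : Fin (n + 1),
      ∑ S ∈ (univ.erase i).powersetCard j, x i ^ (n + 1 - j) * ∏ t ∈ S, x t =
      ∑ i, ((-1) ^ j * ∑ S ∈ (univ.erase i).powersetCard j, ∏ t ∈ S, x t) *
        (x i ^ (n - j + 1) / ↑(n - j + 1)) := by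
    intro j hj
    have hjn : n - j + 1 = n + 1 - j := by have := mem_range.mp hj; omega
    rw [hjn, Nat.cast_sub (by have := mem_range.mp hj; omega), mul_sum]
    refine sum_congr rfl fun i _ => ?_
    rw [← mul_sum]
    ring
  rw [sum_congr rfl hterm]
  push_cast
  ring

theorem card_filter_erase_of_pos {ι : Type*} [DecidableEq ι] {p : ι → Prop} [DecidablePred p]
    {s : Finset ι} {j : ι} (hjs : j ∈ s) (hj : p j) :
    #((s.erase j).filter p) = #(s.filter p) - 1 := by
  rw [filter_erase, card_erase_of_mem (mem_filter.mpr ⟨hjs, hj⟩)]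

theorem card_filter_erase_of_neg {ι : Type*} [DecidableEq ι] {p : ι → Prop} [DecidablePred p]
    (s : Finset ι) (j : ι) (hj : ¬ p j) : #((s.erase j).filter p) = #(s.filter p) := by
  rw [filter_erase, erase_eq_of_notMem (fun h => hj (mem_filter.mp h).2)]

section TwoValued

variable {i m : ℕ} {M : Type*} [CommMonoid M]

theorem prod_ite_val_lt (s : Finset (Fin (i + m))) (u v : M) :
    ∏ t ∈ s, (if t.val < i then u else v) =
      u ^ #(s.filter fun t => t.val < i) * v ^ #(s.filter fun t => ¬ t.val < i) := by
  rw [prod_ite, prod_const, prod_const]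

theorem card_filter_val_lt_add : #(univ.filter fun t : Fin (i + m) => t.val < i) = i := by
  simp [Fin.card_filter_val_lt]

theorem card_filter_not_val_lt_add :
    #(univ.filter fun t : Fin (i + m) => ¬ t.val < i) = m := by
  have := card_filter_add_card_filter_not (s := (univ : Finset (Fin (i + m)))) (fun t => t.val < i)
  rw [card_filter_val_lt_add, card_univ, Fintype.card_fin] at this
  omega

theorem sum_integral_prod_erase_sub_ite (a b : ℝ) :
    ∑ j : Fin (i + m), ∫ y in 0..(if j.val < i then a else b),
        ∏ t ∈ univ.erase j, (y - if t.val < i then a else b) =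
      i * (∫ y in 0..a, (y - a) ^ (i - 1) * (y - b) ^ m) +
        m * ∫ y in 0..b, (y - a) ^ i * (y - b) ^ (m - 1) := by
  have hterm (j : Fin (i + m)) :
      ∫ y in 0..(if j.val < i then a else b),
          ∏ t ∈ univ.erase j, (y - if t.val < i then a else b) =
        if j.val < i then ∫ y in 0..a, (y - a) ^ (i - 1) * (y - b) ^ m
        else ∫ y in 0..b, (y - a) ^ i * (y - b) ^ (m - 1) := by
    simp only [sub_ite, prod_ite_val_lt]
    split_ifs with hj
    · rw [card_filter_erase_of_pos (mem_univ j) hj,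
        card_filter_erase_of_neg univ j (not_not.mpr hj), card_filter_val_lt_add,
        card_filter_not_val_lt_add]
    · rw [card_filter_erase_of_neg univ j hj, card_filter_erase_of_pos (mem_univ j) hj,
        card_filter_val_lt_add, card_filter_not_val_lt_add]
  simp only [hterm, sum_ite, sum_const, card_filter_val_lt_add, card_filter_not_val_lt_add,
    nsmul_eq_mul]

end TwoValued

theorem integral_deriv_sub_pow_mul_sub_pow (a b u v : ℝ) (p q : ℕ) :
    (p + 1) * (∫ y in u..v, (y - a) ^ p * (y - b) ^ (q + 1)) +
        (q + 1) * ∫ y in u..v, (y - a) ^ (p + 1) * (y - b) ^ q =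
      (v - a) ^ (p + 1) * (v - b) ^ (q + 1) - (u - a) ^ (p + 1) * (u - b) ^ (q + 1) := by
  rw [← intervalIntegral.integral_const_mul, ← intervalIntegral.integral_const_mul,
    ← intervalIntegral.integral_add ((by fun_prop : Continuous _).intervalIntegrable _ _)
      ((by fun_prop : Continuous _).intervalIntegrable _ _)]
  apply intervalIntegral.integral_eq_sub_of_hasDerivAt
  · intro y _
    refine ((((hasDerivAt_id' y).sub_const a).fun_pow (p + 1)).fun_mul
      (((hasDerivAt_id' y).sub_const b).fun_pow (q + 1))).congr_deriv ?_
    push_cast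
    ring
  · exact Continuous.intervalIntegrable (by fun_prop) _ _

theorem integral_sub_pow_mul_sub_pow (a b : ℝ) (p q : ℕ) :
    ∫ y in a..b, (y - a) ^ p * (y - b) ^ q =
      (-1) ^ q * p ! * q ! * (b - a) ^ (p + q + 1) / (p + q + 1)! := by
  induction q generalizing p with
  | zero =>
    simp only [pow_zero, mul_one, intervalIntegral.integral_comp_sub_right (fun y => y ^ p),
      sub_self, integral_pow]
    rw [zero_pow (by omega), Nat.factorial_succ]
    push_cast
    field_simp
    ring
  | succ q ih =>
    have h := integral_deriv_sub_pow_mul_sub_pow a b a b p q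
    rw [ih, sub_self, sub_self, zero_pow (by omega), zero_pow (by omega), mul_zero, zero_mul,
      sub_zero, show p + 1 + q + 1 = p + (q + 1) + 1 by omega, Nat.factorial_succ p] at h
    rw [Nat.factorial_succ q]
    apply mul_left_cancel₀ (by positivity : (p : ℝ) + 1 ≠ 0)
    push_cast at h ⊢
    linear_combination h

theorem psi_ite_eq_integral (p q : ℕ) (a b : ℝ) :
    psi (p + 1 + (q + 1)) (fun t => if t.val < p + 1 then a else b) =
      (q + 1) * ∫ y in a..b, (y - a) ^ (p + 1) * (y - b) ^ q := by
  rw [psi_eq_sum_integral_prod_sub (by omega), sum_integral_prod_erase_sub_ite, prod_ite_val_lt,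
    card_filter_val_lt_add, card_filter_not_val_lt_add]
  simp only [add_tsub_cancel_right]
  have hsplit : ∫ y in 0..b, (y - a) ^ (p + 1) * (y - b) ^ q =
      (∫ y in 0..a, (y - a) ^ (p + 1) * (y - b) ^ q) +
        ∫ y in a..b, (y - a) ^ (p + 1) * (y - b) ^ q :=
    (intervalIntegral.integral_add_adjacent_intervals
      (Continuous.intervalIntegrable (by fun_prop) _ _)
      (Continuous.intervalIntegrable (by fun_prop) _ _)).symm
  rw [hsplit]
  have h := integral_deriv_sub_pow_mul_sub_pow a b 0 a p q
  rw [sub_self, zero_pow (by omega), zero_mul, zero_sub] at h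
  push_cast
  linear_combination h

theorem stmt3_general (k i : ℕ) (hi1 : 1 ≤ i) (hi2 : i ≤ k - 1) (a b : ℝ) :
    psi k (fun t => if (t : ℕ) < i then a else b)
      = (-1 : ℝ) ^ (i + 1) * (a - b) ^ k / (k.choose i : ℝ) := by
  obtain ⟨p, rfl⟩ : ∃ p, i = p + 1 := ⟨i - 1, by omega⟩
  obtain ⟨q, rfl⟩ : ∃ q, k = p + 1 + (q + 1) := ⟨k - (p + 1) - 1, by omega⟩
  rw [psi_ite_eq_integral, integral_sub_pow_mul_sub_pow, Nat.cast_choose ℝ (by omega),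
    add_tsub_cancel_left]
  have hsign : (-1 : ℝ) ^ (p + 1 + 1) * (-1) ^ (p + 1 + (q + 1)) = (-1) ^ q := by
    rw [← pow_add, show p + 1 + 1 + (p + 1 + (q + 1)) = q + 2 * (p + 2) by ring, pow_add,
      pow_mul, neg_one_sq, one_pow, mul_one]
  rw [show p + 1 + q + 1 = p + 1 + (q + 1) by omega, Nat.factorial_succ q,
    show a - b = -(b - a) by ring, neg_pow (b - a), ← mul_assoc ((-1 : ℝ) ^ (p + 1 + 1)),
    hsign]
  have hfac : ((p + 1 + (q + 1))! : ℝ) ≠ 0 := by positivity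
  field_simp
  push_cast
  ring

/-- For every integer `k ≥ 2`, every `1 ≤ i ≤ k − 1` and all reals `a, b`, the `k`-th
central moment kernel evaluated at `i` copies of `a` followed by `k − i` copies of `b`
satisfies `ψ_k(a,…,a,b,…,b) = (−1)^{i+1} (a − b)^k / C(k,i)`. -/
theorem stmt3 (k i : ℕ) (hk : 2 ≤ k) (hi1 : 1 ≤ i) (hi2 : i ≤ k - 1) (a b : ℝ) :
    psi k (fun t => if (t : ℕ) < i then a else b)
      = (-1 : ℝ) ^ (i + 1) * (a - b) ^ k / (k.choose i : ℝ) :=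
  stmt3_general k i hi1 hi2 a b
end

section
/- For all real numbers x₁ ≤ x₂ ≤ x₃, the quantity D(x₁,x₂,x₃) = −x₁²/2 − x₁x₂ + 2x₁x₃ + x₂² − x₂x₃ − x₃²/2 (which equals the partial derivative ∂ψ₃/∂x₂ of the third central moment kernel) satisfies −(3/4)(x₁ − x₃)² ≤ D(x₁,x₂,x₃) ≤ −(1/2)(x₁ − x₃)² ≤ 0. -/
/-!
Completing the square in `x₂` gives `D = (x₂ - (x₁ + x₃)/2)² - (3/4)(x₁ - x₃)²`, and factoring the
same quadratic at its roots `x₁, x₃` gives `D = (x₂ - x₁)(x₂ - x₃) - (1/2)(x₁ - x₃)²`; the product is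
`≤ 0` exactly when `x₂` lies between `x₁` and `x₃`.
-/

/-- The third central moment kernel (Heffernan 1997):
`ψ₃(x₁,x₂,x₃) = (1/3)(x₁³+x₂³+x₃³) − (1/2)Σ_{i≠j} x_i² x_j + 2x₁x₂x₃`. -/
noncomputable def psi3 (x1 x2 x3 : ℝ) : ℝ :=
  (1 / 3) * (x1 ^ 3 + x2 ^ 3 + x3 ^ 3)
    - (1 / 2) * (x1 ^ 2 * x2 + x1 ^ 2 * x3 + x2 ^ 2 * x1 + x2 ^ 2 * x3
        + x3 ^ 2 * x1 + x3 ^ 2 * x2)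
    + 2 * x1 * x2 * x3

noncomputable def psi3Deriv (x1 x2 x3 : ℝ) : ℝ :=
  -x1 ^ 2 / 2 - x1 * x2 + 2 * x1 * x3 + x2 ^ 2 - x2 * x3 - x3 ^ 2 / 2

theorem hasDerivAt_psi3_snd (x1 x2 x3 : ℝ) :
    HasDerivAt (fun t => psi3 x1 t x3) (psi3Deriv x1 x2 x3) x2 := by
  have h := ((((hasDerivAt_pow 3 x2).const_mul (1 / 3 : ℝ)).sub
      ((hasDerivAt_pow 2 x2).const_mul ((x1 + x3) / 2))).add
      ((hasDerivAt_id x2).const_mul (2 * x1 * x3 - (x1 ^ 2 + x3 ^ 2) / 2))).add_const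
      ((x1 ^ 3 + x3 ^ 3) / 3 - (x1 ^ 2 * x3 + x3 ^ 2 * x1) / 2)
  refine (h.congr_deriv ?_).congr_of_eventuallyEq (.of_forall fun t => ?_)
  · simp only [psi3Deriv]
    push_cast
    ring
  · simp only [psi3, id, Pi.add_apply, Pi.sub_apply]
    ring

theorem psi3Deriv_eq_sq_sub (x1 x2 x3 : ℝ) :
    psi3Deriv x1 x2 x3 = (x2 - (x1 + x3) / 2) ^ 2 - 3 / 4 * (x1 - x3) ^ 2 := by
  unfold psi3Deriv
  ring

theorem psi3Deriv_eq_mul_sub (x1 x2 x3 : ℝ) :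
    psi3Deriv x1 x2 x3 = (x2 - x1) * (x2 - x3) - 1 / 2 * (x1 - x3) ^ 2 := by
  unfold psi3Deriv
  ring

theorem neg_three_quarters_mul_sq_le_psi3Deriv (x1 x2 x3 : ℝ) :
    -(3 / 4) * (x1 - x3) ^ 2 ≤ psi3Deriv x1 x2 x3 := by
  rw [psi3Deriv_eq_sq_sub]
  nlinarith [sq_nonneg (x2 - (x1 + x3) / 2)]

theorem psi3Deriv_le_neg_half_mul_sq {x1 x2 x3 : ℝ} (h12 : x1 ≤ x2) (h23 : x2 ≤ x3) :
    psi3Deriv x1 x2 x3 ≤ -(1 / 2) * (x1 - x3) ^ 2 := by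
  rw [psi3Deriv_eq_mul_sub]
  nlinarith [mul_nonpos_of_nonneg_of_nonpos (sub_nonneg.2 h12) (sub_nonpos.2 h23)]

/-- For all `x₁ ≤ x₂ ≤ x₃`, the quantity
`D(x₁,x₂,x₃) = −x₁²/2 − x₁x₂ + 2x₁x₃ + x₂² − x₂x₃ − x₃²/2`, which equals the partial
derivative `∂ψ₃/∂x₂` of the third central moment kernel, satisfies
`−(3/4)(x₁−x₃)² ≤ D ≤ −(1/2)(x₁−x₃)² ≤ 0`. -/
theorem stmt5 (x1 x2 x3 : ℝ) (h12 : x1 ≤ x2) (h23 : x2 ≤ x3) :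
    HasDerivAt (fun t : ℝ => psi3 x1 t x3)
      (-x1 ^ 2 / 2 - x1 * x2 + 2 * x1 * x3 + x2 ^ 2 - x2 * x3 - x3 ^ 2 / 2) x2
    ∧ -(3 / 4) * (x1 - x3) ^ 2
        ≤ -x1 ^ 2 / 2 - x1 * x2 + 2 * x1 * x3 + x2 ^ 2 - x2 * x3 - x3 ^ 2 / 2
    ∧ -x1 ^ 2 / 2 - x1 * x2 + 2 * x1 * x3 + x2 ^ 2 - x2 * x3 - x3 ^ 2 / 2
        ≤ -(1 / 2) * (x1 - x3) ^ 2
    ∧ -(1 / 2) * (x1 - x3) ^ 2 ≤ 0 :=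
  ⟨hasDerivAt_psi3_snd x1 x2 x3, neg_three_quarters_mul_sq_le_psi3Deriv x1 x2 x3,
    psi3Deriv_le_neg_half_mul_sq h12 h23,
    mul_nonpos_of_nonpos_of_nonneg (by norm_num) (sq_nonneg _)⟩
end

section
/- Let X₁, X₂, X₃ be independent, identically distributed real random variables with E|X₁|³ < ∞. Then E[ψ₃(X₁, X₂, X₃)] = E[(X₁ − E X₁)³], i.e. ψ₃ is an unbiased kernel for the third central moment. -/
/-!
`ψ₃` is invariant under a common translation of its arguments, so the `Xᵢ` may be replaced by the
centred variables `Yᵢ = Xᵢ - E X₁`. For independent centred variables every mixed monomial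
`yᵢ² yⱼ` (`i ≠ j`) and `y₁ y₂ y₃` has expectation zero, so only `(1/3) Σ E Yᵢ³ = E Y₁³` survives.
All these monomials are integrable because a product of three `L³` functions is, by AM-GM.
-/

open MeasureTheory ProbabilityTheory

open Finset

lemma psi3_sub_const (x1 x2 x3 c : ℝ) :
    psi3 (x1 - c) (x2 - c) (x3 - c) = psi3 x1 x2 x3 := by
  unfold psi3; ring

lemma psi3_eq_sum (x : Fin 3 → ℝ) :
    psi3 (x 0) (x 1) (x 2)
      = 1 / 3 * ∑ i, x i ^ 3 - 1 / 2 * ∑ i, ∑ j with j ≠ i, x i ^ 2 * x j + 2 * ∏ i, x i := by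
  simp only [psi3, filter_ne', mem_univ, sum_erase_eq_sub, Fin.sum_univ_three,
    Fin.prod_univ_three]
  ring

lemma abs_mul_mul_le_sum_abs_pow_three (a b c : ℝ) :
    |a * b * c| ≤ |a| ^ 3 + |b| ^ 3 + |c| ^ 3 := by
  rw [abs_mul, abs_mul]
  have ha := abs_nonneg a; have hb := abs_nonneg b; have hc := abs_nonneg c
  nlinarith [mul_nonneg ha hb, mul_nonneg hb hc, mul_nonneg ha hc,
    sq_nonneg (|a| - |b|), sq_nonneg (|b| - |c|), sq_nonneg (|a| - |c|)]

section

variable {Ω : Type*} [MeasurableSpace Ω] {μ : Measure Ω}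

lemma MeasureTheory.MemLp.integrable_mul_mul {f g h : Ω → ℝ} (hf : MemLp f 3 μ)
    (hg : MemLp g 3 μ) (hh : MemLp h 3 μ) : Integrable (fun ω ↦ f ω * g ω * h ω) μ := by
  have cube {u : Ω → ℝ} (hu : MemLp u 3 μ) : Integrable (fun ω ↦ |u ω| ^ 3) μ := by
    simpa using hu.integrable_norm_pow (p := 3) (by norm_num)
  refine (((cube hf).add (cube hg)).add (cube hh)).mono'
    ((hf.aestronglyMeasurable.mul hg.aestronglyMeasurable).mul hh.aestronglyMeasurable) ?_
  exact .of_forall fun ω ↦ abs_mul_mul_le_sum_abs_pow_three _ _ _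

lemma integral_psi3_of_iIndepFun_of_integral_eq_zero {Y : Fin 3 → Ω → ℝ}
    (hindep : iIndepFun Y μ) (hY : ∀ i, MemLp (Y i) 3 μ) (hcent : ∀ i, ∫ ω, Y i ω ∂μ = 0) :
    ∫ ω, psi3 (Y 0 ω) (Y 1 ω) (Y 2 ω) ∂μ = 1 / 3 * ∑ i, ∫ ω, Y i ω ^ 3 ∂μ := by
  have hcube (i) : Integrable (fun ω ↦ Y i ω ^ 3) μ := by
    simpa [pow_succ] using (hY i).integrable_mul_mul (hY i) (hY i)
  have hcross (i j) : Integrable (fun ω ↦ Y i ω ^ 2 * Y j ω) μ := by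
    simpa [sq] using (hY i).integrable_mul_mul (hY i) (hY j)
  have hprod : Integrable (fun ω ↦ ∏ i, Y i ω) μ := by
    simpa [Fin.prod_univ_three] using (hY 0).integrable_mul_mul (hY 1) (hY 2)
  have hcross_sum (i) : Integrable (fun ω ↦ ∑ j with j ≠ i, Y i ω ^ 2 * Y j ω) μ :=
    integrable_finsetSum _ fun j _ ↦ hcross i j
  have hcross_zero (i) : ∫ ω, ∑ j with j ≠ i, Y i ω ^ 2 * Y j ω ∂μ = 0 := by
    rw [integral_finsetSum _ fun j _ ↦ hcross i j]
    refine sum_eq_zero fun j hj ↦ ?_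
    rw [(hindep.indepFun (mem_filter.1 hj).2.symm).integral_fun_comp_mul_comp (f := (· ^ 2))
      (g := fun y ↦ y) (hY i).aemeasurable (hY j).aemeasurable (by fun_prop) (by fun_prop),
      hcent j, mul_zero]
  have hprod_zero : ∫ ω, ∏ i, Y i ω ∂μ = 0 := by
    rw [hindep.integral_fun_prod_eq_prod_integral fun i ↦ (hY i).aestronglyMeasurable]
    exact prod_eq_zero (mem_univ 0) (hcent 0)
  have hcubes := integrable_finsetSum univ fun i _ ↦ hcube i
  have hcrosses := integrable_finsetSum univ fun i _ ↦ hcross_sum i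
  simp only [fun ω ↦ psi3_eq_sum (Y · ω)]
  rw [integral_add ((hcubes.const_mul _).sub' (hcrosses.const_mul _)) (hprod.const_mul _),
    integral_sub (hcubes.const_mul _) (hcrosses.const_mul _), integral_const_mul,
    integral_const_mul, integral_const_mul, integral_finsetSum _ fun i _ ↦ hcube i,
    integral_finsetSum _ fun i _ ↦ hcross_sum i, hprod_zero]
  simp [hcross_zero]

end

theorem stmt6_general {Ω : Type*} [MeasureSpace Ω] [IsProbabilityMeasure (ℙ : Measure Ω)]
    (X : Fin 3 → Ω → ℝ)
    (hindep : iIndepFun X (ℙ : Measure Ω))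
    (hid : ∀ i, IdentDistrib (X i) (X 0) (ℙ : Measure Ω) (ℙ : Measure Ω))
    (hmom : MemLp (X 0) 3 (ℙ : Measure Ω)) :
    ∫ ω, psi3 (X 0 ω) (X 1 ω) (X 2 ω) ∂(ℙ : Measure Ω)
      = ∫ ω, (X 0 ω - ∫ ω', X 0 ω' ∂(ℙ : Measure Ω)) ^ 3 ∂(ℙ : Measure Ω) := by
  set m := ∫ ω, X 0 ω
  let Y : Fin 3 → Ω → ℝ := fun i ω ↦ X i ω - m
  have hY (i) : MemLp (Y i) 3 := ((hid i).symm.memLp_snd hmom).sub (memLp_const m)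
  have hcent (i) : ∫ ω, Y i ω = 0 := by
    rw [integral_sub ((hid i).symm.integrable_snd (hmom.integrable (by norm_num)))
      (integrable_const m), (hid i).integral_eq, integral_const, probReal_univ, one_smul, sub_self]
  have hcube (i) : ∫ ω, Y i ω ^ 3 = ∫ ω, Y 0 ω ^ 3 :=
    ((hid i).comp ((measurable_id.sub_const m).pow_const 3)).integral_eq
  calc ∫ ω, psi3 (X 0 ω) (X 1 ω) (X 2 ω)
      = ∫ ω, psi3 (Y 0 ω) (Y 1 ω) (Y 2 ω) := by simp only [Y, psi3_sub_const]
    _ = 1 / 3 * ∑ i, ∫ ω, Y i ω ^ 3 :=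
        integral_psi3_of_iIndepFun_of_integral_eq_zero
          (hindep.comp _ fun _ ↦ measurable_id.sub_const m) hY hcent
    _ = ∫ ω, Y 0 ω ^ 3 := by simp only [hcube, sum_const, card_univ, Fintype.card_fin]; ring

/-- Let `X₁, X₂, X₃` be i.i.d. real random variables with `E|X₁|³ < ∞`. Then
`E[ψ₃(X₁,X₂,X₃)] = E[(X₁ − EX₁)³]`: `ψ₃` is an unbiased kernel for the third central
moment. -/
theorem stmt6 {Ω : Type*} [MeasureSpace Ω] [IsProbabilityMeasure (ℙ : Measure Ω)]
    (X : Fin 3 → Ω → ℝ) (hmeas : ∀ i, Measurable (X i))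
    (hindep : iIndepFun X (ℙ : Measure Ω))
    (hid : ∀ i, IdentDistrib (X i) (X 0) (ℙ : Measure Ω) (ℙ : Measure Ω))
    (hmom : MemLp (X 0) 3 (ℙ : Measure Ω)) :
    ∫ ω, psi3 (X 0 ω) (X 1 ω) (X 2 ω) ∂(ℙ : Measure Ω)
      = ∫ ω, (X 0 ω - ∫ ω', X 0 ω' ∂(ℙ : Measure Ω)) ^ 3 ∂(ℙ : Measure Ω) :=
  stmt6_general X hindep hid hmom
end

section
/- For all integers k ≥ 2 and 0 ≤ i ≤ k − 1, the following summation identity holds: Σ_{g=i+1}^{k−1} (−1)^{g+1} · (k − i)/(k − g + 1) · C(k − i − 1, g − i − 1) = (−1)^{k+1} + (k − i)(−1)^k, where C(·,·) denotes the binomial coefficient and an empty sum equals 0. -/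
/-!
Put `n = k - i - 1` and `j = g - i - 1`. Absorbing the factor `(n + 1)/(n + 1 - j)` into the
binomial coefficient turns `C(n, j)` into `C(n + 1, j)`, so the sum is `(-1)^i` times the
partial alternating sum `∑_{j < n} (-1)^j C(n + 1, j) = (-1)^(n+1) n`, which telescopes by Pascal's
rule. Both sides then equal `(-1)^k n`.
-/

open Finset

theorem Nat.cast_choose_succ_eq_div_mul {K : Type*} [Field K] [CharZero K] {n j : ℕ}
    (hj : j ≤ n) :
    ((n + 1).choose j : K) = ((n : K) + 1) / ((n : K) + 1 - j) * n.choose j := by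
  have hne : ((n + 1 - j : ℕ) : K) ≠ 0 := Nat.cast_ne_zero.mpr (by omega)
  have hsub : (n : K) + 1 - j = ((n + 1 - j : ℕ) : K) := by
    push_cast [Nat.cast_sub (by omega : j ≤ n + 1)]
    ring
  rw [hsub, div_mul_eq_mul_div, eq_div_iff hne, mul_comm ((n : K) + 1)]
  exact_mod_cast (Nat.choose_mul_succ_eq n j).symm

theorem alternating_sum_range_choose_succ {R : Type*} [CommRing R] (n : ℕ) :
    ∑ j ∈ range n, (-1 : R) ^ j * (n + 1).choose j = -(-1) ^ n * n := by
  cases n with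
  | zero => simp
  | succ m =>
    have hZ := Int.alternating_sum_range_choose_eq_choose (n := m + 1) (m := m)
    rw [Nat.choose_succ_self_right] at hZ
    calc _ = (-1) ^ m * ((m + 1 : ℕ) : R) := by exact_mod_cast congrArg (Int.cast : ℤ → R) hZ
      _ = _ := by push_cast; ring

/-- For all integers `k ≥ 2` and `0 ≤ i ≤ k − 1`,
`Σ_{g=i+1}^{k−1} (−1)^{g+1} (k−i)/(k−g+1) C(k−i−1, g−i−1) = (−1)^{k+1} + (k−i)(−1)^k`
(an empty sum equals 0). -/
theorem stmt8 (k i : ℕ) (hk : 2 ≤ k) (hi : i ≤ k - 1) :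
    ∑ g ∈ Finset.Icc (i + 1) (k - 1),
        (-1 : ℝ) ^ (g + 1) * (((k : ℝ) - i) / ((k : ℝ) - g + 1))
          * ((k - i - 1).choose (g - i - 1) : ℝ)
      = (-1 : ℝ) ^ (k + 1) + ((k : ℝ) - i) * (-1 : ℝ) ^ k := by
  obtain ⟨n, rfl⟩ : ∃ n, k = n + i + 1 := ⟨k - i - 1, by omega⟩
  rw [show n + i + 1 - 1 = n + i by omega, ← Ico_add_one_right_eq_Icc,
    sum_Ico_eq_sum_range, show n + i + 1 - (i + 1) = n by omega]
  calc _ = ∑ j ∈ range n, (-1 : ℝ) ^ i * ((-1) ^ j * (n + 1).choose j) := by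
        refine sum_congr rfl fun j hj => ?_
        rw [show n + i + 1 - i - 1 = n by omega, show i + 1 + j - i - 1 = j by omega,
          Nat.cast_choose_succ_eq_div_mul (mem_range.mp hj).le]
        push_cast
        ring
    _ = _ := by
        rw [← mul_sum, alternating_sum_range_choose_succ]
        push_cast
        ring
end

section
/- For all integers k ≥ 2, i ≥ 1, j ≥ 0 with i + j < k, the following summation identity holds: Σ_{g=j+1}^{i+j} (−1)^{g+1} · (1/(k − g + 1)) · i · C(i − 1, g − j − 1) · C(k − i, j) = (−1)^{i+j+1} · i! · (k − i)! / ((k − j)! · j!); equivalently, the left-hand side equals C(k, i)^{−1} (−1)^{1+i} C(k, j) (−1)^{j}. -/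
/-!
Substituting `g = j + 1 + (n - m)` with `i = n + 1` and `k = a + 1 + j + n` turns the sum into
`(-1)^j i C(k-i, j)` times `Σ_m (-1)^(n-m) C(n,m) / (a+1+m)`, the `n`-th forward difference of
`y ↦ y⁻¹` at `a + 1`. Since `Δ (1 / (x)_n) = -n / (x)_(n+1)` for the rising factorial `(x)_n`,
that difference is `(-1)^n n! / (a+1)_(n+1) = (-1)^n n! a! / (k-j)!`, and the rest is
factorial bookkeeping.
-/

open Finset Polynomial
open scoped Nat

lemma ascPochhammer_succ_eval_eq_mul_eval_add_one {R : Type*} [CommSemiring R] (n : ℕ) (x : R) :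
    (ascPochhammer R (n + 1)).eval x = x * (ascPochhammer R n).eval (x + 1) := by
  simp [ascPochhammer_succ_left]

section OrderedField

variable {K : Type*} [Field K] [LinearOrder K] [IsStrictOrderedRing K]

theorem fwdDiff_iter_inv_eq (n : ℕ) {x : K} (hx : 0 < x) :
    (fwdDiff 1)^[n] (fun y : K ↦ y⁻¹) x = (-1) ^ n * n ! / (ascPochhammer K (n + 1)).eval x := by
  induction n generalizing x with
  | zero => simp
  | succ n ih =>
    have hP := (ascPochhammer_pos (n + 1) x hx).ne'
    have hQ := (ascPochhammer_pos (n + 1) (x + 1) (by linarith)).ne'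
    have hPQ := ascPochhammer_succ_eval (n + 1) x
    rw [ascPochhammer_succ_eval_eq_mul_eval_add_one] at hPQ
    rw [Function.iterate_succ_apply', fwdDiff, ih (by linarith), ih hx,
      ascPochhammer_succ_eval_eq_mul_eval_add_one (n + 1) x]
    push_cast [Nat.factorial_succ] at hPQ ⊢
    field_simp
    linear_combination -(-1 : K) ^ n * hPQ

theorem sum_range_neg_one_pow_mul_choose_div_add (n : ℕ) {x : K} (hx : 0 < x) :
    ∑ m ∈ range (n + 1), (-1) ^ (n - m) * (n.choose m : K) / (x + m)
      = (-1) ^ n * n ! / (ascPochhammer K (n + 1)).eval x := by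
  rw [← fwdDiff_iter_inv_eq n hx, fwdDiff_iter_eq_sum_shift]
  simp [div_eq_mul_inv]

theorem sum_range_neg_one_pow_mul_choose_div_natCast_add (n a : ℕ) :
    ∑ m ∈ range (n + 1), (-1) ^ (n - m) * (n.choose m : K) / ((a : K) + 1 + m)
      = (-1) ^ n * n ! * a ! / (a + n + 1)! := by
  rw [sum_range_neg_one_pow_mul_choose_div_add n (by positivity), add_assoc,
    ← factorial_mul_ascPochhammer K a (n + 1)]
  have : (a ! : K) ≠ 0 := by positivity
  field_simp

end OrderedField

theorem sum_Icc_neg_one_pow_mul_choose_div (k i j : ℕ) (hi : 1 ≤ i) (hij : i + j < k) :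
    ∑ g ∈ Icc (j + 1) (i + j),
        (-1 : ℝ) ^ (g + 1) * (1 / ((k : ℝ) - g + 1)) * (i : ℝ)
          * ((i - 1).choose (g - j - 1) : ℝ) * ((k - i).choose j : ℝ)
      = (-1 : ℝ) ^ (i + j + 1) * (i ! : ℝ) * ((k - i)! : ℝ) / (((k - j)! : ℝ) * (j ! : ℝ)) := by
  obtain ⟨n, rfl⟩ : ∃ n, i = n + 1 := ⟨i - 1, by omega⟩
  obtain ⟨a, rfl⟩ : ∃ a, k = a + 1 + j + n := ⟨k - (n + 1 + j), by omega⟩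
  have reindex : ∑ g ∈ Icc (j + 1) (n + 1 + j),
        (-1 : ℝ) ^ (g + 1) * (1 / (((a + 1 + j + n : ℕ) : ℝ) - g + 1)) * ((n + 1 : ℕ) : ℝ)
          * ((n + 1 - 1).choose (g - j - 1) : ℝ) * ((a + 1 + j + n - (n + 1)).choose j : ℝ)
      = (-1) ^ j * (n + 1) * ((a + j).choose j : ℝ)
          * ∑ m ∈ range (n + 1), (-1) ^ (n - m) * (n.choose m : ℝ) / ((a : ℝ) + 1 + m) := by
    rw [← Ico_add_one_right_eq_Icc, sum_Ico_eq_sum_range, mul_sum, ← sum_range_reflect]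
    refine sum_congr (by congr 1; omega) fun m hm ↦ ?_
    obtain ⟨d, rfl⟩ := Nat.exists_eq_add_of_le (mem_range_succ_iff.mp hm)
    rw [show m + d + 1 + j + 1 - (j + 1) - 1 - m = d by omega, show j + 1 + d - j - 1 = d by omega,
      show a + 1 + j + (m + d) - (m + d + 1) = a + j by omega, Nat.add_sub_cancel_left,
      Nat.add_sub_cancel, Nat.choose_symm_add]
    have hden : ((a + 1 + j + (m + d) : ℕ) : ℝ) - (j + 1 + d : ℕ) + 1 = a + 1 + m := by
      push_cast; ring
    rw [hden]
    push_cast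
    ring
  rw [reindex, sum_range_neg_one_pow_mul_choose_div_natCast_add, ← Nat.choose_symm_add,
    Nat.cast_add_choose, show a + 1 + j + n - (n + 1) = a + j by omega,
    show a + 1 + j + n - j = a + n + 1 by omega]
  push_cast [Nat.factorial_succ]
  field_simp
  ring

theorem stmt10_general (k i j : ℕ) (hi : 1 ≤ i) (hij : i + j < k) :
    (∑ g ∈ Finset.Icc (j + 1) (i + j),
        (-1 : ℝ) ^ (g + 1) * (1 / ((k : ℝ) - g + 1)) * (i : ℝ)
          * ((i - 1).choose (g - j - 1) : ℝ) * ((k - i).choose j : ℝ)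
      = (-1 : ℝ) ^ (i + j + 1) * (i.factorial : ℝ) * ((k - i).factorial : ℝ)
          / (((k - j).factorial : ℝ) * (j.factorial : ℝ)))
    ∧ (-1 : ℝ) ^ (i + j + 1) * (i.factorial : ℝ) * ((k - i).factorial : ℝ)
          / (((k - j).factorial : ℝ) * (j.factorial : ℝ))
      = ((k.choose i : ℝ))⁻¹ * (-1 : ℝ) ^ (1 + i) * (k.choose j : ℝ) * (-1 : ℝ) ^ j := by
  refine ⟨sum_Icc_neg_one_pow_mul_choose_div k i j hi hij, ?_⟩
  rw [Nat.cast_choose ℝ (by omega : i ≤ k), Nat.cast_choose ℝ (by omega : j ≤ k)]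
  field_simp
  ring

/-- For all integers `k ≥ 2`, `i ≥ 1`, `j ≥ 0` with `i + j < k`,
`Σ_{g=j+1}^{i+j} (−1)^{g+1} (1/(k−g+1)) i C(i−1, g−j−1) C(k−i, j)
  = (−1)^{i+j+1} i! (k−i)! / ((k−j)! j!)`;
equivalently, the left-hand side equals `C(k,i)⁻¹ (−1)^{1+i} C(k,j) (−1)^j`. -/
theorem stmt10 (k i j : ℕ) (hk : 2 ≤ k) (hi : 1 ≤ i) (hij : i + j < k) :
    (∑ g ∈ Finset.Icc (j + 1) (i + j),
        (-1 : ℝ) ^ (g + 1) * (1 / ((k : ℝ) - g + 1)) * (i : ℝ)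
          * ((i - 1).choose (g - j - 1) : ℝ) * ((k - i).choose j : ℝ)
      = (-1 : ℝ) ^ (i + j + 1) * (i.factorial : ℝ) * ((k - i).factorial : ℝ)
          / (((k - j).factorial : ℝ) * (j.factorial : ℝ)))
    ∧ (-1 : ℝ) ^ (i + j + 1) * (i.factorial : ℝ) * ((k - i).factorial : ℝ)
          / (((k - j).factorial : ℝ) * (j.factorial : ℝ))
      = ((k.choose i : ℝ))⁻¹ * (-1 : ℝ) ^ (1 + i) * (k.choose j : ℝ) * (-1 : ℝ) ^ j :=
  stmt10_general k i j hi hij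
end

section
/- For all integers k and h with 2 ≤ h, the following summation identity holds: Σ_{g=k−h+1}^{k−1} (−1)^{g+1} · C(h − 1, g − k + h − 1) · (g − k + h − 1)/(k − g + 1) = (h − 2)(−1)^k, where C(·,·) denotes the binomial coefficient. -/
/-!
With `h = n + 2` and `j = g - (k - h + 1)`, the sum becomes
`(-1)^(k-n) * ∑_{j ≤ n} (-1)^j C(n+1, j) j/(n+2-j)`. Since `C(m, j) j/(m+1-j) = C(m+1, j) - C(m, j)`,
this is a difference of two partial alternating sums of binomial coefficients, each of which is
a single binomial coefficient: `(-1)^n C(n+1, n) - (-1)^n C(n, n) = (-1)^n n`.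
-/

open Finset

theorem Nat.cast_choose_mul_div_eq_choose_succ_sub {K : Type*} [Field K] [CharZero K]
    {n j : ℕ} (hj : j ≤ n) :
    (n.choose j : K) * (j / (n + 1 - j)) = (n + 1).choose j - n.choose j := by
  have hpos : (n : K) + 1 - j ≠ 0 := by
    rw [← Nat.cast_succ, ← Nat.cast_sub (by omega)]
    exact_mod_cast (by omega : n + 1 - j ≠ 0)
  have key : (n.choose j : K) * (n + 1) = (n + 1).choose j * (n + 1 - j) := by
    have := congrArg (Nat.cast : ℕ → K) (Nat.choose_mul_succ_eq n j)
    push_cast [Nat.cast_sub (show j ≤ n + 1 by omega)] at this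
    exact this
  field_simp
  linear_combination key

theorem alternating_sum_range_choose_eq_choose {R : Type*} [CommRing R] (n m : ℕ) :
    ∑ j ∈ range (m + 1), (-1 : R) ^ j * (n + 1).choose j = (-1) ^ m * n.choose m := by
  exact_mod_cast congrArg (Int.cast : ℤ → R) Int.alternating_sum_range_choose_eq_choose

theorem alternating_sum_range_choose_mul_div {K : Type*} [Field K] [CharZero K] (n : ℕ) :
    ∑ j ∈ range (n + 1), (-1 : K) ^ j * (n + 1).choose j * (j / (n + 2 - j)) = (-1) ^ n * n := by
  have pascal : ∀ j ∈ range (n + 1), (-1 : K) ^ j * (n + 1).choose j * (j / (n + 2 - j)) =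
      (-1) ^ j * (n + 2).choose j - (-1) ^ j * (n + 1).choose j := by
    intro j hj
    have := Nat.cast_choose_mul_div_eq_choose_succ_sub (K := K) (n := n + 1) (mem_range.mp hj).le
    push_cast at this
    rw [mul_assoc, show (n : K) + 2 = n + 1 + 1 by ring, this]
    ring
  rw [sum_congr rfl pascal, sum_sub_distrib, alternating_sum_range_choose_eq_choose,
    alternating_sum_range_choose_eq_choose, Nat.choose_succ_self_right, Nat.choose_self]
  push_cast
  ring

/-- For all integers `k` and `h` with `2 ≤ h`,
`Σ_{g=k−h+1}^{k−1} (−1)^{g+1} C(h−1, g−k+h−1) (g−k+h−1)/(k−g+1) = (h−2)(−1)^k`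
(Lemma 5 in the SI Text). -/
theorem stmt13 (k h : ℤ) (hh : 2 ≤ h) :
    ∑ g ∈ Finset.Icc (k - h + 1) (k - 1),
        (-1 : ℝ) ^ (g + 1) * ((h - 1).toNat.choose (g - k + h - 1).toNat : ℝ)
          * (((g : ℝ) - (k : ℝ) + (h : ℝ) - 1) / ((k : ℝ) - (g : ℝ) + 1))
      = ((h : ℝ) - 2) * (-1 : ℝ) ^ k := by
  obtain ⟨n, rfl⟩ : ∃ n : ℕ, h = n + 2 := ⟨(h - 2).toNat, by omega⟩
  rw [Int.Icc_eq_finset_map, sum_map, show (k - 1 + 1 - (k - (n + 2) + 1)).toNat = n + 1 by omega]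
  simp only [Function.Embedding.trans_apply, Nat.castEmbedding_apply, addLeftEmbedding_apply]
  calc _ = ∑ j ∈ range (n + 1),
          (-1 : ℝ) ^ (k - n) * ((-1) ^ j * (n + 1).choose j * (j / (n + 2 - j))) := by
        refine sum_congr rfl fun j _ => ?_
        rw [show k - (n + 2) + 1 + j + 1 = (k - n) + (j : ℕ) by ring, zpow_add₀ (by norm_num),
          zpow_natCast, show (n + 2 - 1 : ℤ).toNat = n + 1 by omega,
          show (k - (n + 2) + 1 + j - k + (n + 2) - 1 : ℤ).toNat = j by omega]
        push_cast
        ring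
    _ = (-1) ^ (k - n) * (-1) ^ (n : ℤ) * n := by
        rw [← mul_sum, alternating_sum_range_choose_mul_div, zpow_natCast, mul_assoc]
    _ = (((n + 2 : ℤ) : ℝ) - 2) * (-1) ^ k := by
        rw [← zpow_add₀ (by norm_num), sub_add_cancel]
        push_cast
        ring
end
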